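/- arXiv:2503.18558 — 3 statements merged into one kernel-verified Lean document; each statement's English description precedes it below -/
import Mathlib

section
/- The subgroup of GL_2(ℤ) generated by the matrices A = [[1,0],[2,1]] and B = [[1,2],[0,1]] is a free group of rank 2; that is, the group homomorphism from the free group on two generators to GL_2(ℤ) sending the two generators to A and B, respectively, is injective. -/
/-!
Ping-pong on the nonzero vectors `(x, y)` of `R²`, read through their slope `z = x / y` on the
projective line. The upper shear `!![1, k; 0, 1]` acts as `z ↦ z + k` and the lower shear
`!![1, 0; k, 1]` as `1 / z ↦ 1 / z + k`. For `k ≥ 2` the upper shear maps the complement of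
`(-∞, -1] ∪ {∞}` into `(1, ∞)` and its inverse maps the complement of `(1, ∞)` into
`(-∞, -1] ∪ {∞}`; likewise the lower shear with `[0, 1]` and `(-1, 0)`. These four sets partition
the projective line, so the ping-pong lemma applies.
-/

open Function Matrix Pointwise

namespace Matrix.GeneralLinearGroup

variable {n R : Type*} [Fintype n] [DecidableEq n] [Semiring R]

instance instMulActionNonzeroVec : MulAction (GL n R) {v : n → R // v ≠ 0} where
  smul g v := ⟨(g : Matrix n n R) *ᵥ v.1, fun h => v.2 <| by
    simpa [mulVec_mulVec] using congrArg (((g⁻¹ : GL n R) : Matrix n n R) *ᵥ ·) h⟩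
  one_smul v := Subtype.ext (one_mulVec v.1)
  mul_smul g h v := Subtype.ext (mulVec_mulVec v.1 _ _).symm

@[simp]
lemma val_smul_nonzeroVec (g : GL n R) (v : {v : n → R // v ≠ 0}) :
    (g • v).1 = (g : Matrix n n R) *ᵥ v.1 :=
  rfl

end Matrix.GeneralLinearGroup

section Shear

variable {R : Type*} [Ring R]

def lowerShear (k : R) : GL (Fin 2) R :=
  ⟨!![1, 0; k, 1], !![1, 0; -k, 1], by simp [one_fin_two], by simp [one_fin_two]⟩

def upperShear (k : R) : GL (Fin 2) R :=
  ⟨!![1, k; 0, 1], !![1, -k; 0, 1], by simp [one_fin_two], by simp [one_fin_two]⟩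

def shearPair (k : R) : Bool → GL (Fin 2) R := fun t => if t then lowerShear k else upperShear k

@[simp]
lemma lowerShear_mulVec (k : R) (v : Fin 2 → R) :
    (lowerShear k : Matrix (Fin 2) (Fin 2) R) *ᵥ v = ![v 0, k * v 0 + v 1] := by
  ext i; fin_cases i <;> simp [lowerShear, vecHead, vecTail]

@[simp]
lemma lowerShear_inv_mulVec (k : R) (v : Fin 2 → R) :
    ((lowerShear k)⁻¹ : GL (Fin 2) R) *ᵥ v = ![v 0, -k * v 0 + v 1] := by
  ext i; fin_cases i <;> simp [lowerShear, vecHead, vecTail]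

@[simp]
lemma upperShear_mulVec (k : R) (v : Fin 2 → R) :
    (upperShear k : Matrix (Fin 2) (Fin 2) R) *ᵥ v = ![v 0 + k * v 1, v 1] := by
  ext i; fin_cases i <;> simp [upperShear, vecHead, vecTail]

@[simp]
lemma upperShear_inv_mulVec (k : R) (v : Fin 2 → R) :
    ((upperShear k)⁻¹ : GL (Fin 2) R) *ᵥ v = ![v 0 + -k * v 1, v 1] := by
  ext i; fin_cases i <;> simp [upperShear, vecHead, vecTail]

end Shear

section PingPong

variable {R : Type*} [CommRing R] [LinearOrder R]

variable (R) in
/-- On slopes `z = x / y`: `X true = [0, 1]` and `X false = (1, ∞)`. -/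
def shearPingPongX : Bool → Set {v : Fin 2 → R // v ≠ 0}
  | true => {v | 0 ≤ v.1 0 * v.1 1 ∧ |v.1 0| ≤ |v.1 1|}
  | false => {v | 0 < v.1 0 * v.1 1 ∧ |v.1 1| < |v.1 0|}

variable (R) in
/-- On slopes `z = x / y`: `Y true = (-1, 0)` and `Y false = (-∞, -1] ∪ {∞}`. -/
def shearPingPongY : Bool → Set {v : Fin 2 → R // v ≠ 0}
  | true => {v | v.1 0 * v.1 1 < 0 ∧ |v.1 0| < |v.1 1|}
  | false => {v | v.1 0 * v.1 1 ≤ 0 ∧ |v.1 1| ≤ |v.1 0|}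

lemma pairwise_disjoint_shearPingPongX : Pairwise (Disjoint on (shearPingPongX R)) := by
  refine pairwise_disjoint_on_bool.2 (Set.disjoint_left.2 ?_)
  rintro v ⟨-, h⟩ ⟨-, h'⟩
  exact h.not_gt h'

lemma pairwise_disjoint_shearPingPongY : Pairwise (Disjoint on (shearPingPongY R)) := by
  refine pairwise_disjoint_on_bool.2 (Set.disjoint_left.2 ?_)
  rintro v ⟨-, h⟩ ⟨-, h'⟩
  exact h.not_ge h'

variable [IsStrictOrderedRing R]

lemma disjoint_shearPingPongX_Y (i j : Bool) :
    Disjoint (shearPingPongX R i) (shearPingPongY R j) := by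
  refine Set.disjoint_left.2 fun v hX hY => ?_
  cases i <;> cases j
  · exact hY.1.not_gt hX.1
  · exact lt_asymm hY.1 hX.1
  · have hxy : v.1 0 * v.1 1 = 0 := le_antisymm hY.1 hX.1
    have habs : |v.1 0| = |v.1 1| := le_antisymm hX.2 hY.2
    have hx : v.1 0 = 0 := by
      rcases mul_eq_zero.1 hxy with h | h
      · exact h
      · rwa [h, abs_zero, abs_eq_zero] at habs
    have hy : v.1 1 = 0 := by rwa [hx, abs_zero, eq_comm, abs_eq_zero] at habs
    exact v.2 (funext (Fin.forall_fin_two.2 ⟨hx, hy⟩))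
  · exact hY.1.not_ge hX.1

lemma shearPingPongX_nonempty (i : Bool) : (shearPingPongX R i).Nonempty := by
  cases i
  · exact ⟨⟨![2, 1], by simp⟩, by simp [shearPingPongX]⟩
  · exact ⟨⟨![0, 1], by simp⟩, by simp [shearPingPongX]⟩

variable {k x y : R}

lemma shear_nonneg_and_abs_le (hk : 2 ≤ k) (h : 0 ≤ x * y ∨ |y| ≤ |x|) :
    0 ≤ x * (k * x + y) ∧ |x| ≤ |k * x + y| := by
  rw [← sq_le_sq] at h ⊢
  have : -(x ^ 2 + y ^ 2) ≤ 2 * (x * y) := by nlinarith [sq_nonneg (x + y)]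
  rcases h with h | h <;> constructor <;>
    nlinarith [sq_nonneg x, sq_nonneg y, mul_nonneg (sub_nonneg.2 hk) (sq_nonneg x)]

lemma shear_pos_and_abs_lt (hk : 2 ≤ k) (h : 0 < x * y ∨ |y| < |x|) :
    0 < x * (k * x + y) ∧ |x| < |k * x + y| := by
  rw [← sq_lt_sq] at h ⊢
  have : -(x ^ 2 + y ^ 2) ≤ 2 * (x * y) := by nlinarith [sq_nonneg (x + y)]
  rcases h with h | h <;> constructor <;>
    nlinarith [sq_nonneg x, sq_nonneg y, mul_nonneg (sub_nonneg.2 hk) (sq_nonneg x)]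

lemma shearPair_smul_compl_subset (hk : 2 ≤ k) (i : Bool) :
    shearPair k i • (shearPingPongY R i)ᶜ ⊆ shearPingPongX R i := by
  refine Set.smul_set_subset_iff.2 fun v hv => ?_
  cases i <;> simp only [shearPingPongX, shearPingPongY, shearPair, Set.mem_compl_iff,
    Set.mem_ofPred_eq, not_and_or, not_le, not_lt, GeneralLinearGroup.val_smul_nonzeroVec,
    upperShear_mulVec, lowerShear_mulVec, cons_val_zero, cons_val_one, Bool.false_eq_true,
    if_false, if_true] at hv ⊢
  · simpa [mul_comm, add_comm] using
      shear_pos_and_abs_lt hk (x := v.1 1) (y := v.1 0) (by rwa [mul_comm])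
  · exact shear_nonneg_and_abs_le hk hv

lemma shearPair_inv_smul_compl_subset (hk : 2 ≤ k) (i : Bool) :
    (shearPair k)⁻¹ i • (shearPingPongX R i)ᶜ ⊆ shearPingPongY R i := by
  refine Set.smul_set_subset_iff.2 fun v hv => ?_
  cases i <;> simp only [shearPingPongX, shearPingPongY, shearPair, Set.mem_compl_iff,
    Set.mem_ofPred_eq, not_and_or, not_le, not_lt, GeneralLinearGroup.val_smul_nonzeroVec,
    upperShear_inv_mulVec, lowerShear_inv_mulVec, Pi.inv_apply, cons_val_zero, cons_val_one,
    Bool.false_eq_true, if_false, if_true] at hv ⊢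
  · simpa [mul_comm, add_comm] using
      shear_nonneg_and_abs_le hk (x := -v.1 1) (y := v.1 0) (by simpa [mul_comm] using hv)
  · simpa using shear_pos_and_abs_lt hk (x := -v.1 0) (y := v.1 1) (by simpa using hv)

end PingPong

theorem injective_lift_shearPair {R : Type} [CommRing R] [LinearOrder R] [IsStrictOrderedRing R]
    {k : R} (hk : 2 ≤ k) : Injective (FreeGroup.lift (shearPair k)) :=
  FreeGroup.injective_lift_of_ping_pong (shearPair k) (shearPingPongX R) (shearPingPongY R)
    shearPingPongX_nonempty pairwise_disjoint_shearPingPongX pairwise_disjoint_shearPingPongY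
    disjoint_shearPingPongX_Y (shearPair_smul_compl_subset hk) (shearPair_inv_smul_compl_subset hk)

/-- **Sanov's theorem over ℤ.** The subgroup of `GL₂(ℤ)` generated by the matrices
`A = !![1,0;2,1]` and `B = !![1,2;0,1]` is free of rank 2: the group homomorphism from
the free group on two generators (indexed by `Bool`) sending the generators
to `A` and `B` is injective. -/
theorem sanov_free_subgroup_GL2_int :
    ∃ A B : GL (Fin 2) ℤ,
      (A : Matrix (Fin 2) (Fin 2) ℤ) = !![1, 0; 2, 1] ∧
      (B : Matrix (Fin 2) (Fin 2) ℤ) = !![1, 2; 0, 1] ∧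
      Function.Injective (FreeGroup.lift fun t : Bool => if t then A else B) :=
  ⟨lowerShear 2, upperShear 2, rfl, rfl, injective_lift_shearPair le_rfl⟩
end

section
/- Let K be a field of characteristic 0. Then the subgroup of GL_2(K) generated by the matrices A = [[1,0],[2,1]] and B = [[1,2],[0,1]] is a free group of rank 2; that is, the group homomorphism from the free group on two generators to GL_2(K) sending the two generators to A and B, respectively, is injective. -/
/-!
On a nonzero vector `(x, y)` over an ordered field, `A` acts on the slope `t = y / x` by
`t ↦ t + 2` and `B` acts on `1 / t` by `s ↦ s + 2`. Hence the ping-pong lemma applies to the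
slope ranges `[1, ∞]`, `(-∞, -1)` for `A^{±1}` and `[0, 1)`, `[-1, 0)` for `B^{±1}`, and the
generated subgroup of `GL₂(ℚ)` is free. A field of characteristic zero contains `ℚ`, and
`GL₂(ℚ) → GL₂(K)` is injective.
-/

open Matrix

theorem Matrix.GeneralLinearGroup.map_injective {n R S : Type*} [Fintype n] [DecidableEq n]
    [CommRing R] [CommRing S] {f : R →+* S} (hf : Function.Injective f) :
    Function.Injective (map (n := n) f) :=
  Units.map_injective (Matrix.map_injective hf)

def nonzeroVectors (G V : Type*) [Group G] [AddMonoid V] [DistribMulAction G V] :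
    SubMulAction G V where
  carrier := {v | v ≠ 0}
  smul_mem' g _ hv := (smul_ne_zero_iff_ne g).2 hv

@[simp]
theorem mem_nonzeroVectors {G V : Type*} [Group G] [AddMonoid V] [DistribMulAction G V]
    {v : V} :
    v ∈ nonzeroVectors G V ↔ v ≠ 0 :=
  Iff.rfl

section Generators

variable (R : Type*) [CommRing R]

def sanovA : GL (Fin 2) R :=
  ⟨!![1, 0; 2, 1], !![1, 0; -2, 1], by simp [one_fin_two], by simp [one_fin_two]⟩

def sanovB : GL (Fin 2) R :=
  ⟨!![1, 2; 0, 1], !![1, -2; 0, 1], by simp [one_fin_two], by simp [one_fin_two]⟩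

def sanovGenerators : Bool → GL (Fin 2) R := fun t => if t then sanovA R else sanovB R

variable {R}

theorem sanovA_smul (v : Fin 2 → R) : sanovA R • v = ![v 0, 2 * v 0 + v 1] := by
  ext i; fin_cases i <;> simp [sanovA, Units.smul_def, mulVec, dotProduct, Fin.sum_univ_two]

theorem sanovA_inv_smul (v : Fin 2 → R) : (sanovA R)⁻¹ • v = ![v 0, v 1 - 2 * v 0] := by
  ext i
  fin_cases i <;>
    simp [sanovA, Units.smul_def, mulVec, dotProduct, Fin.sum_univ_two, sub_eq_add_neg, add_comm]

theorem sanovB_smul (v : Fin 2 → R) : sanovB R • v = ![v 0 + 2 * v 1, v 1] := by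
  ext i; fin_cases i <;> simp [sanovB, Units.smul_def, mulVec, dotProduct, Fin.sum_univ_two]

theorem sanovB_inv_smul (v : Fin 2 → R) : (sanovB R)⁻¹ • v = ![v 0 - 2 * v 1, v 1] := by
  ext i
  fin_cases i <;>
    simp [sanovB, Units.smul_def, mulVec, dotProduct, Fin.sum_univ_two, sub_eq_add_neg]

variable {S : Type*} [CommRing S]

@[simp]
theorem map_sanovA (f : R →+* S) : GeneralLinearGroup.map f (sanovA R) = sanovA S := by
  ext i j; fin_cases i <;> fin_cases j <;> simp [GeneralLinearGroup.map_apply, sanovA, map_ofNat]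

@[simp]
theorem map_sanovB (f : R →+* S) : GeneralLinearGroup.map f (sanovB R) = sanovB S := by
  ext i j; fin_cases i <;> fin_cases j <;> simp [GeneralLinearGroup.map_apply, sanovB, map_ofNat]

theorem map_comp_lift_sanovGenerators (f : R →+* S) :
    (GeneralLinearGroup.map f).comp (FreeGroup.lift (sanovGenerators R)) =
      FreeGroup.lift (sanovGenerators S) :=
  FreeGroup.ext_hom _ _ fun t => by cases t <;> simp [sanovGenerators]

end Generators

namespace Sanov

-- `Type`, not `Type*`: `FreeGroup.injective_lift_of_ping_pong` puts the group in the universe of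
-- the index type `Bool`.
variable {F : Type} [Field F] [LinearOrder F] [IsStrictOrderedRing F]

local notation "P" => nonzeroVectors (GL (Fin 2) F) (Fin 2 → F)

-- The slope ranges `[1, ∞]`, `[0, 1)` (for `X`) and `(-∞, -1)`, `[-1, 0)` (for `Y`) of
-- `t = v 1 / v 0`, multiplied through by `(v 0)²` at index `true` (`A`)
-- and by `(v 1)²` at `false` (`B`).
def pingPongX : Bool → Set P
  | true => {v | v.1 0 * v.1 0 ≤ v.1 0 * v.1 1}
  | false => {v | v.1 1 = 0 ∨ v.1 1 * v.1 1 < v.1 0 * v.1 1}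

def pingPongY : Bool → Set P
  | true => {v | v.1 0 * v.1 1 < -(v.1 0 * v.1 0)}
  | false => {v | v.1 1 ≠ 0 ∧ v.1 0 * v.1 1 ≤ -(v.1 1 * v.1 1)}

theorem mul_self_add_mul_self_pos (v : P) : 0 < v.1 0 * v.1 0 + v.1 1 * v.1 1 := by
  have hv : v.1 ≠ 0 := v.2
  by_contra! h
  have h0 : v.1 0 = 0 := by nlinarith [mul_self_nonneg (v.1 0), mul_self_nonneg (v.1 1)]
  have h1 : v.1 1 = 0 := by nlinarith [mul_self_nonneg (v.1 0), mul_self_nonneg (v.1 1)]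
  exact hv (by ext i; fin_cases i <;> assumption)

theorem pingPongX_nonempty (t : Bool) : (pingPongX t : Set P).Nonempty := by
  cases t
  · exact ⟨⟨![1, 0], by simp⟩, by simp [pingPongX]⟩
  · exact ⟨⟨![0, 1], by simp⟩, by simp [pingPongX]⟩

theorem pairwise_disjoint_pingPongX :
    Pairwise (Function.onFun Disjoint (pingPongX (F := F))) := by
  refine pairwise_disjoint_on_bool.2 (Set.disjoint_left.2 fun v hA hB => ?_)
  have := mul_self_add_mul_self_pos v
  simp only [Set.mem_ofPred_eq] at hA hB
  rcases hB with h | h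
  · rw [h] at hA this; nlinarith
  · nlinarith [mul_self_nonneg (v.1 0 - v.1 1)]

theorem pairwise_disjoint_pingPongY :
    Pairwise (Function.onFun Disjoint (pingPongY (F := F))) := by
  refine pairwise_disjoint_on_bool.2 (Set.disjoint_left.2 fun v hA hB => ?_)
  simp only [Set.mem_ofPred_eq] at hA hB
  nlinarith [mul_self_nonneg (v.1 0 + v.1 1)]

theorem disjoint_pingPongX_pingPongY (s t : Bool) :
    Disjoint (pingPongX s : Set P) (pingPongY t) := by
  refine Set.disjoint_left.2 fun v hX hY => ?_
  have := mul_self_add_mul_self_pos v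
  cases s <;> cases t <;> simp only [pingPongX, pingPongY, Set.mem_ofPred_eq] at hX hY
  · rcases hX with h | h
    · exact hY.1 h
    · linarith [mul_self_nonneg (v.1 1), hY.2]
  · rcases hX with h | h
    · rw [h] at hY this; nlinarith
    · nlinarith
  · nlinarith [hY.1]
  · nlinarith

theorem sanovGenerators_smul_mem_pingPongX {t : Bool} {v : P} (hv : v ∉ pingPongY t) :
    sanovGenerators F t • v ∈ pingPongX t := by
  cases t <;>
    simp only [pingPongX, pingPongY, Set.mem_ofPred_eq, not_and, not_le, not_lt] at hv ⊢ <;>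
    simp only [sanovGenerators, SubMulAction.val_smul, sanovA_smul, sanovB_smul, if_true,
      Bool.false_eq_true, if_false, cons_val_zero, cons_val_one]
  · by_cases h : v.1 1 = 0
    · exact Or.inl h
    · exact Or.inr (by linarith [hv h])
  · linarith

theorem sanovGenerators_inv_smul_mem_pingPongY {t : Bool} {v : P} (hv : v ∉ pingPongX t) :
    (sanovGenerators F t)⁻¹ • v ∈ pingPongY t := by
  cases t <;>
    simp only [pingPongX, pingPongY, Set.mem_ofPred_eq, not_or, not_lt, not_le] at hv ⊢ <;>
    simp only [sanovGenerators, SubMulAction.val_smul, sanovA_inv_smul, sanovB_inv_smul, if_true,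
      Bool.false_eq_true, if_false, cons_val_zero, cons_val_one]
  · exact ⟨hv.1, by linarith⟩
  · linarith

theorem injective_lift_sanovGenerators :
    Function.Injective (FreeGroup.lift (sanovGenerators F)) :=
  FreeGroup.injective_lift_of_ping_pong (sanovGenerators F) pingPongX pingPongY pingPongX_nonempty
    pairwise_disjoint_pingPongX pairwise_disjoint_pingPongY disjoint_pingPongX_pingPongY
    (fun _ => Set.smul_set_subset_iff.2 fun _ hv => sanovGenerators_smul_mem_pingPongX hv)
    (fun _ => Set.smul_set_subset_iff.2 fun _ hv => sanovGenerators_inv_smul_mem_pingPongY hv)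

end Sanov

/-- **Sanov's theorem over a field of characteristic 0.** Let `K` be a field of
characteristic `0`. The subgroup of `GL₂(K)` generated by the matrices
`A = !![1,0;2,1]` and `B = !![1,2;0,1]` is free of rank 2: the group homomorphism from
the free group on two generators (indexed by `Bool`) sending the generators
to `A` and `B` is injective. -/
theorem sanov_free_subgroup_GL2_charZero (K : Type) [Field K] [CharZero K] :
    ∃ A B : GL (Fin 2) K,
      (A : Matrix (Fin 2) (Fin 2) K) = !![1, 0; 2, 1] ∧
      (B : Matrix (Fin 2) (Fin 2) K) = !![1, 2; 0, 1] ∧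
      Function.Injective (FreeGroup.lift fun t : Bool => if t then A else B) := by
  refine ⟨sanovA K, sanovB K, rfl, rfl, ?_⟩
  change Function.Injective (FreeGroup.lift (sanovGenerators K))
  rw [← map_comp_lift_sanovGenerators (algebraMap ℚ K)]
  exact (GeneralLinearGroup.map_injective (algebraMap ℚ K).injective).comp
    Sanov.injective_lift_sanovGenerators
end

section
/- Let K be a field and E a directed graph with E⁰ finite such that the Leavitt path algebra L_K(E) is noncommutative. Then there exists a primitive ideal P of L_K(E) such that L_K(E)/P is noncommutative. Concretely: there exist a simple left L_K(E)-module M, elements a, b ∈ L_K(E), and m ∈ M such that (a·b − b·a)·m ≠ 0 (equivalently, the quotient of L_K(E) by the annihilator of M — a primitive ideal — is a noncommutative ring). -/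
/-! Leavitt path algebra of a directed graph with finitely many vertices.
The graph is given by types `V` (vertices), `E` (edges) and maps `src rng : E → V`. -/

/-- A vertex is a sink if it emits no edges. -/
def IsSink {V E : Type} (src : E → V) (v : V) : Prop := ∀ e : E, src e ≠ v

/-- A vertex is an infinite emitter if it emits infinitely many edges. -/
def IsInfEmitter {V E : Type} (src : E → V) (v : V) : Prop :=
  {e : E | src e = v}.Infinite

/-- A vertex is regular if it is neither a sink nor an infinite emitter. -/
def IsRegularVertex {V E : Type} (src : E → V) (v : V) : Prop :=
  ¬ IsSink src v ∧ ¬ IsInfEmitter src v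

/-- The generator of the free algebra corresponding to a vertex `v`. -/
def vtx (K V E : Type) [Field K] (v : V) : FreeAlgebra K (V ⊕ E ⊕ E) :=
  FreeAlgebra.ι K (Sum.inl v)

/-- The generator of the free algebra corresponding to an edge `e`. -/
def edg (K V E : Type) [Field K] (e : E) : FreeAlgebra K (V ⊕ E ⊕ E) :=
  FreeAlgebra.ι K (Sum.inr (Sum.inl e))

/-- The generator of the free algebra corresponding to a ghost edge `e*`. -/
def ghe (K V E : Type) [Field K] (e : E) : FreeAlgebra K (V ⊕ E ⊕ E) :=
  FreeAlgebra.ι K (Sum.inr (Sum.inr e))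

/-- The defining relations of the Leavitt path algebra `L_K(E)`: (V), (E1), (E2),
(CK1), (CK2), together with `1 = Σ_{v ∈ E⁰} v` (which makes sense as `V` is finite). -/
inductive LeavittRel (K V E : Type) [Field K] [Fintype V] (src rng : E → V) :
    FreeAlgebra K (V ⊕ E ⊕ E) → FreeAlgebra K (V ⊕ E ⊕ E) → Prop
  | vtx_same (v : V) :
      LeavittRel K V E src rng (vtx K V E v * vtx K V E v) (vtx K V E v)
  | vtx_ne (v v' : V) (h : v ≠ v') :
      LeavittRel K V E src rng (vtx K V E v * vtx K V E v') 0
  | src_edge (e : E) :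
      LeavittRel K V E src rng (vtx K V E (src e) * edg K V E e) (edg K V E e)
  | edge_rng (e : E) :
      LeavittRel K V E src rng (edg K V E e * vtx K V E (rng e)) (edg K V E e)
  | rng_ghost (e : E) :
      LeavittRel K V E src rng (vtx K V E (rng e) * ghe K V E e) (ghe K V E e)
  | ghost_src (e : E) :
      LeavittRel K V E src rng (ghe K V E e * vtx K V E (src e)) (ghe K V E e)
  | ck1_same (e : E) :
      LeavittRel K V E src rng (ghe K V E e * edg K V E e) (vtx K V E (rng e))
  | ck1_ne (e f : E) (h : e ≠ f) :
      LeavittRel K V E src rng (ghe K V E e * edg K V E f) 0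
  | ck2 (v : V) (hreg : IsRegularVertex src v) :
      LeavittRel K V E src rng (vtx K V E v)
        (∑ e ∈ (Set.not_infinite.mp hreg.2).toFinset, edg K V E e * ghe K V E e)
  | unit : LeavittRel K V E src rng (∑ v : V, vtx K V E v) 1

/-- The Leavitt path algebra `L_K(E)` of a graph with finitely many vertices. -/
abbrev LPA (K V E : Type) [Field K] [Fintype V] (src rng : E → V) : Type :=
  RingQuot (LeavittRel K V E src rng)

/-- The image of a vertex `v` in `L_K(E)`. -/
noncomputable def Vtx (K V E : Type) [Field K] [Fintype V] (src rng : E → V) (v : V) :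
    LPA K V E src rng :=
  RingQuot.mkAlgHom K (LeavittRel K V E src rng) (vtx K V E v)

/-- The image of an edge `e` in `L_K(E)`. -/
noncomputable def Edg (K V E : Type) [Field K] [Fintype V] (src rng : E → V) (e : E) :
    LPA K V E src rng :=
  RingQuot.mkAlgHom K (LeavittRel K V E src rng) (edg K V E e)

/-- The image of a ghost edge `e*` in `L_K(E)`. -/
noncomputable def Ghe (K V E : Type) [Field K] [Fintype V] (src rng : E → V) (e : E) :
    LPA K V E src rng :=
  RingQuot.mkAlgHom K (LeavittRel K V E src rng) (ghe K V E e)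

-- AUX START

/-- If `t` is an idempotent that annihilates every simple module, then `t = 0`. -/
private lemma LPAaux.idem_eq_zero {R : Type} [Ring R] (t : R)
    (ht : ∀ (M : Type) (i1 : AddCommGroup M) (i2 : Module R M),
      IsSimpleModule R M → ∀ m : M, t • m = 0)
    (hidem : t * t = t) : t = 0 := by
  by_cases hI : (Ideal.span {1 - t} : Ideal R) = ⊤
  · have htmem : t ∈ (Ideal.span {1 - t} : Ideal R) := hI ▸ Submodule.mem_top
    obtain ⟨r, hr⟩ := Submodule.mem_span_singleton.mp htmem
    rw [smul_eq_mul] at hr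
    have hr' : t = r * (1 - t) := hr.symm
    calc t = t * t := hidem.symm
      _ = (r * (1 - t)) * t := by rw [← hr']
      _ = r * ((1 - t) * t) := by rw [mul_assoc]
      _ = r * (t - t * t) := by rw [sub_mul, one_mul]
      _ = 0 := by rw [hidem, sub_self, mul_zero]
  · obtain ⟨m, hmax, hle⟩ := Ideal.exists_le_maximal _ hI
    have hsimple : IsSimpleModule R (R ⧸ m) :=
      isSimpleModule_iff_isCoatom.mpr (Ideal.isMaximal_def.mp hmax)
    have h0 := ht (R ⧸ m) inferInstance inferInstance hsimple (Submodule.Quotient.mk 1)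
    rw [← Submodule.Quotient.mk_smul, smul_eq_mul, mul_one,
      Submodule.Quotient.mk_eq_zero] at h0
    have h1 : (1 - t) ∈ m := hle (Ideal.subset_span rfl)
    have h2 : (1 : R) ∈ m := by simpa using m.add_mem h1 h0
    exact absurd (m.eq_top_iff_one.mpr h2) hmax.ne_top

section LPAaux

variable {K V E : Type} [Field K] [Fintype V] {src rng : E → V}

local notation "𝕍" => Vtx K V E src rng
local notation "𝔼" => Edg K V E src rng
local notation "𝔾" => Ghe K V E src rng

private lemma LPAaux.lrel {x y : FreeAlgebra K (V ⊕ E ⊕ E)}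
    (h : LeavittRel K V E src rng x y) :
    RingQuot.mkAlgHom K (LeavittRel K V E src rng) x =
      RingQuot.mkAlgHom K (LeavittRel K V E src rng) y :=
  RingQuot.mkAlgHom_rel K h

private lemma LPAaux.hVVs (v : V) : 𝕍 v * 𝕍 v = 𝕍 v := by
  simpa only [Vtx, ← map_mul] using LPAaux.lrel (LeavittRel.vtx_same (src := src) (rng := rng) v)

private lemma LPAaux.hVVn {v w : V} (h : v ≠ w) : 𝕍 v * 𝕍 w = 0 := by
  simpa only [Vtx, ← map_mul, map_zero] using
    LPAaux.lrel (LeavittRel.vtx_ne (src := src) (rng := rng) v w h)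

private lemma LPAaux.hSE (e : E) : 𝕍 (src e) * 𝔼 e = 𝔼 e := by
  simpa only [Vtx, Edg, ← map_mul] using
    LPAaux.lrel (LeavittRel.src_edge (src := src) (rng := rng) e)

private lemma LPAaux.hER (e : E) : 𝔼 e * 𝕍 (rng e) = 𝔼 e := by
  simpa only [Vtx, Edg, ← map_mul] using
    LPAaux.lrel (LeavittRel.edge_rng (src := src) (rng := rng) e)

private lemma LPAaux.hRG (e : E) : 𝕍 (rng e) * 𝔾 e = 𝔾 e := by
  simpa only [Vtx, Ghe, ← map_mul] using
    LPAaux.lrel (LeavittRel.rng_ghost (src := src) (rng := rng) e)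

private lemma LPAaux.hGS (e : E) : 𝔾 e * 𝕍 (src e) = 𝔾 e := by
  simpa only [Vtx, Ghe, ← map_mul] using
    LPAaux.lrel (LeavittRel.ghost_src (src := src) (rng := rng) e)

private lemma LPAaux.hGEs (e : E) : 𝔾 e * 𝔼 e = 𝕍 (rng e) := by
  simpa only [Vtx, Edg, Ghe, ← map_mul] using
    LPAaux.lrel (LeavittRel.ck1_same (src := src) (rng := rng) e)

private lemma LPAaux.hGEn {e f : E} (h : e ≠ f) : 𝔾 e * 𝔼 f = 0 := by
  simpa only [Edg, Ghe, ← map_mul, map_zero] using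
    LPAaux.lrel (LeavittRel.ck1_ne (src := src) (rng := rng) e f h)

private lemma LPAaux.hVE {v : V} {e : E} (h : v ≠ src e) : 𝕍 v * 𝔼 e = 0 := by
  rw [← LPAaux.hSE e, ← mul_assoc, LPAaux.hVVn h, zero_mul]

private lemma LPAaux.hEV {v : V} {e : E} (h : v ≠ rng e) : 𝔼 e * 𝕍 v = 0 := by
  conv_lhs => rw [← LPAaux.hER e]
  rw [mul_assoc, LPAaux.hVVn (Ne.symm h), mul_zero]

private lemma LPAaux.hVG {v : V} {e : E} (h : v ≠ rng e) : 𝕍 v * 𝔾 e = 0 := by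
  rw [← LPAaux.hRG e, ← mul_assoc, LPAaux.hVVn h, zero_mul]

private lemma LPAaux.hGV {v : V} {e : E} (h : v ≠ src e) : 𝔾 e * 𝕍 v = 0 := by
  conv_lhs => rw [← LPAaux.hGS e]
  rw [mul_assoc, LPAaux.hVVn (Ne.symm h), mul_zero]

private lemma LPAaux.hEGidem (e : E) : (𝔼 e * 𝔾 e) * (𝔼 e * 𝔾 e) = 𝔼 e * 𝔾 e := by
  rw [mul_assoc, ← mul_assoc (𝔾 e), LPAaux.hGEs, LPAaux.hRG]

private theorem LPAaux.lpa_comm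
    (hT : ∀ a b : LPA K V E src rng, ∀ (M : Type) (i1 : AddCommGroup M)
      (i2 : Module (LPA K V E src rng) M),
      IsSimpleModule (LPA K V E src rng) M → ∀ m : M, (a * b - b * a) • m = 0) :
    ∀ x y : LPA K V E src rng, x * y = y * x := by
  classical
  set R := LPA K V E src rng with hR
  let T : R → Prop := fun t => ∀ (M : Type) (i1 : AddCommGroup M) (i2 : Module R M),
    IsSimpleModule R M → ∀ m : M, t • m = 0
  have hTcomm : ∀ a b : R, T (a * b - b * a) := hT
  have hTl : ∀ (r t : R), T t → T (r * t) := by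
    intro r t ht M i1 i2 hs m
    rw [mul_smul, ht M i1 i2 hs m, smul_zero]
  have hTr : ∀ (t r : R), T t → T (t * r) := by
    intro t r ht M i1 i2 hs m
    rw [mul_smul]
    exact ht M i1 i2 hs (r • m)
  have hTneg : ∀ t : R, T t → T (-t) := by
    intro t ht M i1 i2 hs m
    rw [neg_smul, ht M i1 i2 hs m, neg_zero]
  have hTidem : ∀ t : R, T t → t * t = t → t = 0 := fun t ht h =>
    LPAaux.idem_eq_zero t ht h
  -- Fact 1 : an edge that is not a loop kills its range vertex.
  have fact1 : ∀ e : E, src e ≠ rng e → 𝕍 (rng e) = 0 := by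
    intro e h
    have h1 : T (𝔼 e) := by
      have hc := hTcomm (𝕍 (src e)) (𝔼 e)
      rwa [LPAaux.hSE, LPAaux.hEV h, sub_zero] at hc
    have h2 : T (𝕍 (rng e)) := by
      have := hTl (𝔾 e) _ h1
      rwa [LPAaux.hGEs] at this
    exact hTidem _ h2 (LPAaux.hVVs _)
  have kill : ∀ e : E, 𝕍 (rng e) = 0 → 𝔼 e = 0 ∧ 𝔾 e = 0 := by
    intro e h
    constructor
    · rw [← LPAaux.hER e, h, mul_zero]
    · rw [← LPAaux.hRG e, h, zero_mul]
  -- Fact 2 : two distinct edges with the same range kill that range vertex.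
  have fact2 : ∀ e f : E, e ≠ f → rng e = rng f → 𝕍 (rng f) = 0 := by
    intro e f hne hr
    have h1 : T (𝔼 f * 𝔾 e) := by
      have hc := hTneg _ (hTcomm (𝔾 e) (𝔼 f))
      rwa [LPAaux.hGEn hne, zero_sub, neg_neg] at hc
    have h2 : T (𝔼 f * 𝔾 f) := by
      have h2' := hTr _ (𝔼 e * 𝔾 f) h1
      have key : (𝔼 f * 𝔾 e) * (𝔼 e * 𝔾 f) = 𝔼 f * 𝔾 f := by
        rw [mul_assoc, ← mul_assoc (𝔾 e), LPAaux.hGEs, hr, LPAaux.hRG]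
      rwa [key] at h2'
    have h3 : 𝔼 f * 𝔾 f = 0 := hTidem _ h2 (LPAaux.hEGidem f)
    calc 𝕍 (rng f) = 𝕍 (rng f) * 𝕍 (rng f) := (LPAaux.hVVs _).symm
      _ = (𝔾 f * 𝔼 f) * (𝔾 f * 𝔼 f) := by rw [LPAaux.hGEs]
      _ = 𝔾 f * ((𝔼 f * 𝔾 f) * 𝔼 f) := by simp only [mul_assoc]
      _ = 0 := by rw [h3, zero_mul, mul_zero]
  -- Fact 3 : for a loop, e e* equals the vertex.
  have fact3 : ∀ e : E, src e = rng e → 𝔼 e * 𝔾 e = 𝕍 (rng e) := by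
    intro e h
    have h1 : T (𝕍 (rng e) - 𝔼 e * 𝔾 e) := by
      have hc := hTcomm (𝔾 e) (𝔼 e)
      rwa [LPAaux.hGEs] at hc
    have e1 : 𝕍 (rng e) * (𝔼 e * 𝔾 e) = 𝔼 e * 𝔾 e := by
      rw [← mul_assoc, ← h, LPAaux.hSE]
    have e2 : (𝔼 e * 𝔾 e) * 𝕍 (rng e) = 𝔼 e * 𝔾 e := by
      rw [mul_assoc, ← h, LPAaux.hGS]
    have hidem : (𝕍 (rng e) - 𝔼 e * 𝔾 e) * (𝕍 (rng e) - 𝔼 e * 𝔾 e)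
        = 𝕍 (rng e) - 𝔼 e * 𝔾 e := by
      rw [sub_mul, mul_sub, mul_sub, LPAaux.hVVs, e1, e2, LPAaux.hEGidem]
      abel
    have h0 := hTidem _ h1 hidem
    rw [sub_eq_zero] at h0
    exact h0.symm
  -- Commutation of generators, case by case.
  have cVV : ∀ v w : V, 𝕍 v * 𝕍 w = 𝕍 w * 𝕍 v := by
    intro v w
    by_cases h : v = w
    · rw [h]
    · rw [LPAaux.hVVn h, LPAaux.hVVn (Ne.symm h)]
  have cVE : ∀ (v : V) (e : E), 𝕍 v * 𝔼 e = 𝔼 e * 𝕍 v := by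
    intro v e
    by_cases hl : src e = rng e
    · by_cases hv : v = src e
      · subst hv
        rw [LPAaux.hSE, hl, LPAaux.hER]
      · rw [LPAaux.hVE hv, LPAaux.hEV (fun hh => hv (hh.trans hl.symm))]
    · rw [(kill e (fact1 e hl)).1, zero_mul, mul_zero]
  have cVG : ∀ (v : V) (e : E), 𝕍 v * 𝔾 e = 𝔾 e * 𝕍 v := by
    intro v e
    by_cases hl : src e = rng e
    · by_cases hv : v = rng e
      · subst hv
        rw [LPAaux.hRG, ← hl, LPAaux.hGS]
      · rw [LPAaux.hVG hv, LPAaux.hGV (fun hh => hv (hh.trans hl))]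
    · rw [(kill e (fact1 e hl)).2, zero_mul, mul_zero]
  have cEE : ∀ e f : E, 𝔼 e * 𝔼 f = 𝔼 f * 𝔼 e := by
    intro e f
    by_cases hef : e = f
    · rw [hef]
    · by_cases hr : rng e = rng f
      · have h1 := (kill f (fact2 e f hef hr)).1
        have h2 := (kill e (by rw [hr]; exact fact2 e f hef hr)).1
        rw [h1, h2]
      · by_cases hle : src e = rng e
        · by_cases hlf : src f = rng f
          · have k1 : 𝔼 e * 𝔼 f = 0 := by
              conv_lhs => rw [← LPAaux.hER e]
              rw [mul_assoc, LPAaux.hVE (fun hh => hr (hh.trans hlf)), mul_zero]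
            have k2 : 𝔼 f * 𝔼 e = 0 := by
              conv_lhs => rw [← LPAaux.hER f]
              rw [mul_assoc, LPAaux.hVE (fun hh => hr (hle.symm.trans hh.symm)), mul_zero]
            rw [k1, k2]
          · rw [(kill f (fact1 f hlf)).1, zero_mul, mul_zero]
        · rw [(kill e (fact1 e hle)).1, zero_mul, mul_zero]
  have cEG : ∀ e f : E, 𝔼 e * 𝔾 f = 𝔾 f * 𝔼 e := by
    intro e f
    by_cases hef : e = f
    · subst hef
      by_cases hl : src e = rng e
      · rw [LPAaux.hGEs, fact3 e hl]
      · obtain ⟨h1, h2⟩ := kill e (fact1 e hl)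
        rw [h1, h2]
    · by_cases hle : src e = rng e
      · by_cases hlf : src f = rng f
        · by_cases hr : rng e = rng f
          · have h2 := (kill f (fact2 e f hef hr)).2
            rw [h2, mul_zero, zero_mul]
          · have k1 : 𝔼 e * 𝔾 f = 0 := by
              conv_lhs => rw [← LPAaux.hER e]
              rw [mul_assoc, LPAaux.hVG hr, mul_zero]
            have k2 : 𝔾 f * 𝔼 e = 0 := by
              conv_lhs => rw [← LPAaux.hGS f]
              rw [mul_assoc, LPAaux.hVE (fun hh => hr ((hlf.symm.trans (hh.trans hle)).symm)),
                mul_zero]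
            rw [k1, k2]
        · have h2 := (kill f (fact1 f hlf)).2
          rw [h2, mul_zero, zero_mul]
      · have h1 := (kill e (fact1 e hle)).1
        rw [h1, zero_mul, mul_zero]
  have cGG : ∀ e f : E, 𝔾 e * 𝔾 f = 𝔾 f * 𝔾 e := by
    intro e f
    by_cases hef : e = f
    · rw [hef]
    · by_cases hle : src e = rng e
      · by_cases hlf : src f = rng f
        · by_cases hr : rng e = rng f
          · have h2 := (kill f (fact2 e f hef hr)).2
            rw [h2, mul_zero, zero_mul]
          · have k1 : 𝔾 e * 𝔾 f = 0 := by
              conv_lhs => rw [← LPAaux.hGS e]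
              rw [mul_assoc, LPAaux.hVG (fun hh => hr (hle.symm.trans hh)), mul_zero]
            have k2 : 𝔾 f * 𝔾 e = 0 := by
              conv_lhs => rw [← LPAaux.hGS f]
              rw [mul_assoc, LPAaux.hVG (fun hh => hr ((hlf.symm.trans hh).symm)), mul_zero]
            rw [k1, k2]
        · rw [(kill f (fact1 f hlf)).2, zero_mul, mul_zero]
      · rw [(kill e (fact1 e hle)).2, zero_mul, mul_zero]
  -- generators commute
  set π := RingQuot.mkAlgHom K (LeavittRel K V E src rng) with hπ
  have gen_comm : ∀ z z' : V ⊕ E ⊕ E,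
      π (FreeAlgebra.ι K z) * π (FreeAlgebra.ι K z')
        = π (FreeAlgebra.ι K z') * π (FreeAlgebra.ι K z) := by
    rintro (v | e | e) (w | f | f)
    · exact cVV v w
    · exact cVE v f
    · exact cVG v f
    · exact (cVE w e).symm
    · exact cEE e f
    · exact cEG e f
    · exact (cVG w e).symm
    · exact (cEG f e).symm
    · exact cGG e f
  have hgenall : ∀ (z : V ⊕ E ⊕ E) (b : FreeAlgebra K (V ⊕ E ⊕ E)),
      π (FreeAlgebra.ι K z) * π b = π b * π (FreeAlgebra.ι K z) := by
    intro z b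
    induction b using FreeAlgebra.induction with
    | grade0 r => rw [AlgHom.commutes]; exact (Algebra.commutes r _).symm
    | grade1 x => exact gen_comm z x
    | mul x y hx hy =>
      rw [map_mul]
      calc π (FreeAlgebra.ι K z) * (π x * π y)
          = (π (FreeAlgebra.ι K z) * π x) * π y := (mul_assoc _ _ _).symm
        _ = (π x * π (FreeAlgebra.ι K z)) * π y := by rw [hx]
        _ = π x * (π (FreeAlgebra.ι K z) * π y) := mul_assoc _ _ _
        _ = π x * (π y * π (FreeAlgebra.ι K z)) := by rw [hy]
        _ = (π x * π y) * π (FreeAlgebra.ι K z) := (mul_assoc _ _ _).symm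
    | add x y hx hy => rw [map_add, mul_add, add_mul, hx, hy]
  have hall : ∀ a b : FreeAlgebra K (V ⊕ E ⊕ E), π a * π b = π b * π a := by
    intro a
    induction a using FreeAlgebra.induction with
    | grade0 r => intro b; rw [AlgHom.commutes]; exact Algebra.commutes r _
    | grade1 x => intro b; exact hgenall x b
    | mul x y hx hy =>
      intro b
      rw [map_mul]
      calc (π x * π y) * π b = π x * (π y * π b) := mul_assoc _ _ _
        _ = π x * (π b * π y) := by rw [hy]
        _ = (π x * π b) * π y := (mul_assoc _ _ _).symm
        _ = (π b * π x) * π y := by rw [hx]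
        _ = π b * (π x * π y) := mul_assoc _ _ _
    | add x y hx hy => intro b; rw [map_add, add_mul, mul_add, hx, hy]
  intro x y
  obtain ⟨a, rfl⟩ := RingQuot.mkAlgHom_surjective K (LeavittRel K V E src rng) x
  obtain ⟨b, rfl⟩ := RingQuot.mkAlgHom_surjective K (LeavittRel K V E src rng) y
  exact hall a b

end LPAaux
-- AUX END

/-- Let `K` be a field and `E` a directed graph with finitely many vertices such that
the Leavitt path algebra `L_K(E)` is noncommutative. Then there is a primitive ideal
`P` of `L_K(E)` with `L_K(E)/P` noncommutative; concretely, there are a simple left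
`L_K(E)`-module `M`, elements `a, b` of `L_K(E)` and `m ∈ M` with `(a·b − b·a)·m ≠ 0`
(equivalently, the quotient by the annihilator of `M` — a primitive ideal — is a
noncommutative ring). -/
theorem exists_primitive_ideal_noncommutative_quotient
    (K V E : Type) [Field K] [Fintype V] (src rng : E → V)
    (hnc : ∃ x y : LPA K V E src rng, x * y ≠ y * x) :
    ∃ (M : Type) (_ : AddCommGroup M) (_ : Module (LPA K V E src rng) M),
      IsSimpleModule (LPA K V E src rng) M ∧
      ∃ (a b : LPA K V E src rng) (m : M), (a * b - b * a) • m ≠ 0 := by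
  by_contra hcon
  push_neg at hcon
  obtain ⟨x, y, hxy⟩ := hnc
  exact hxy (LPAaux.lpa_comm (fun a b M i1 i2 hs m => hcon M i1 i2 hs a b m) x y)
end
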